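/- Every random context language is generated by a permitting CD grammar system working in the terminal (t-)mode in which each permitting set attached to a production is either empty or a singleton. -/

import Mathlib

/-- Symbols: nonterminals `N` plus terminals `T`. -/
abbrev Symb (N T : Type) := N ⊕ T

/-- `alph w` is the set of symbols occurring in the string `w`. -/
def alph {α : Type} (w : List α) : Set α := {a | a ∈ w}

/-- A (nonerasing) random context grammar: finitely many productions
`(A → x, Per, For)` with `A ∈ N`, `x ∈ (N ∪ T)⁺`, `Per, For ⊆ N`. -/
structure RCG (N T : Type) where
  rules : Set (N × List (Symb N T) × Set N × Set N)
  fin : rules.Finite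
  ne : ∀ r ∈ rules, r.2.1 ≠ []
  start : N

/-- One derivation step of a random context grammar.  The flag `incl` tells whether
the rewritten symbol is included in the context check (`true`: conditions checked
against `alph (uAv)`; `false`: against `alph (uv)`). -/
def RCG.Step {N T : Type} (G : RCG N T) (incl : Bool)
    (s₁ s₂ : List (Symb N T)) : Prop :=
  ∃ A x Per For u v, (A, x, Per, For) ∈ G.rules ∧
    s₁ = u ++ Sum.inl A :: v ∧ s₂ = u ++ x ++ v ∧
    (∀ B ∈ Per, Sum.inl B ∈ alph (if incl then s₁ else u ++ v)) ∧
    (∀ B ∈ For, Sum.inl B ∉ alph (if incl then s₁ else u ++ v))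

/-- The language of a random context grammar (under the chosen derivation definition). -/
def RCG.Lang {N T : Type} (G : RCG N T) (incl : Bool) : Set (List T) :=
  {w | Relation.ReflTransGen (G.Step incl) [Sum.inl G.start] (w.map Sum.inr)}

/-- The family of random context languages over terminal alphabet `T`
(standard definition: rewritten symbol excluded from the context check). -/
def RC (T : Type) : Set (Set (List T)) :=
  {L | ∃ (N : Type) (G : RCG N T), G.Lang false = L}

/-- A (nonerasing) semi-conditional grammar of degree (1,1): productions
`(A → x, Per, For)` with `Per, For ⊆ N ∪ T` of cardinality at most one. -/
structure SCG (N T : Type) where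
  rules : Set (N × List (Symb N T) × Set (Symb N T) × Set (Symb N T))
  fin : rules.Finite
  ne : ∀ r ∈ rules, r.2.1 ≠ []
  per1 : ∀ r ∈ rules, r.2.2.1.Subsingleton
  for1 : ∀ r ∈ rules, r.2.2.2.Subsingleton
  start : N

/-- One derivation step of a semi-conditional grammar; `incl` as in `RCG.Step`. -/
def SCG.Step {N T : Type} (G : SCG N T) (incl : Bool)
    (s₁ s₂ : List (Symb N T)) : Prop :=
  ∃ A x Per For u v, (A, x, Per, For) ∈ G.rules ∧
    s₁ = u ++ Sum.inl A :: v ∧ s₂ = u ++ x ++ v ∧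
    Per ⊆ alph (if incl then s₁ else u ++ v) ∧
    (∀ a ∈ For, a ∉ alph (if incl then s₁ else u ++ v))

/-- The language of a semi-conditional grammar. -/
def SCG.Lang {N T : Type} (G : SCG N T) (incl : Bool) : Set (List T) :=
  {w | Relation.ReflTransGen (G.Step incl) [Sum.inl G.start] (w.map Sum.inr)}

/-- The family SC(1,1): inclusive derivation definition (context `alph (uAv)`). -/
def SC11 (T : Type) : Set (Set (List T)) :=
  {L | ∃ (N : Type) (G : SCG N T), G.Lang true = L}

/-- The family SC'(1,1): exclusive derivation definition (context `alph (uv)`). -/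
def SC11' (T : Type) : Set (Set (List T)) :=
  {L | ∃ (N : Type) (G : SCG N T), G.Lang false = L}

/-- A permitting production `(A → x, Per)` with `Per ⊆ N`. -/
abbrev PermProd (N T : Type) := N × List (Symb N T) × Set N

/-- A derivation step by a permitting component (context checked against `alph (uv)`). -/
def PStep {N T : Type} (P : Set (PermProd N T)) (s₁ s₂ : List (Symb N T)) : Prop :=
  ∃ A x Per u v, (A, x, Per) ∈ P ∧
    s₁ = u ++ Sum.inl A :: v ∧ s₂ = u ++ x ++ v ∧
    ∀ B ∈ Per, Sum.inl B ∈ alph (u ++ v)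

/-- A maximal (`t`-mode) derivation by a component: at least one step, and no
production of the component is applicable to the result. -/
def TStep {N T : Type} (P : Set (PermProd N T)) (s₁ s₂ : List (Symb N T)) : Prop :=
  Relation.TransGen (PStep P) s₁ s₂ ∧ ∀ s₃, ¬ PStep P s₂ s₃

/-- A permitting CD grammar system: finitely many components, each a finite set of
nonerasing permitting productions. -/
structure CDGS (N T : Type) where
  comps : List (Set (PermProd N T))
  comps_ne : comps ≠ []
  fin : ∀ P ∈ comps, P.Finite
  ne : ∀ P ∈ comps, ∀ r ∈ P, r.2.1 ≠ []
  start : N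

/-- The language generated by a permitting CD grammar system in the `t`-mode. -/
def CDGS.Lang {N T : Type} (Γ : CDGS N T) : Set (List T) :=
  {w | Relation.ReflTransGen (fun s₁ s₂ => ∃ P ∈ Γ.comps, TStep P s₁ s₂)
    [Sum.inl Γ.start] (w.map Sum.inr)}

/-- The family CD(P) of languages of permitting CD grammar systems in `t`-mode. -/
def CDP (T : Type) : Set (Set (List T)) :=
  {L | ∃ (N : Type) (Γ : CDGS N T), Γ.Lang = L}

/-- As `CDP`, but each permitting set is empty or a singleton. -/
def CDP1 (T : Type) : Set (Set (List T)) :=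
  {L | ∃ (N : Type) (Γ : CDGS N T),
    (∀ P ∈ Γ.comps, ∀ r ∈ P, r.2.2.Subsingleton) ∧ Γ.Lang = L}

/-!
A step `u A v ⇒ u x v` by a rule `r = (A → x, Per, For)` is simulated by a sequence of
maximal derivations, each performed by one component. The *select* component of `r` turns one
occurrence of `A` into the marker `check r 0` and *parks* every other occurrence of `A` (this is
permitted by the marker; a second marker is turned into `fail`), so that afterwards the context of
the marker is exactly the parked word `u v`. Then one component per condition of `r` advances the
marker `check r i` to `check r (i + 1)`: for `B ∈ Per` the advance is permitted by `B`, for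
`B ∈ For` it is unconditional but the new marker is turned into `fail` if `B` is present. Finally
the *replace* component rewrites the last marker to `x` and unparks the `A`s. Only nonterminals
occurring in sentential forms matter, so each rule has finitely many conditions to check.

Every component also traps all markers of other phases, turning them into the nonterminal `fail`,
which is never rewritten. Hence every word derivable in the system contains `fail`, or is a
sentential form of the grammar, or is an intermediate stage of the simulation of one step.
-/

open List
open Relation (ReflTransGen TransGen)

section Rename

variable {α : Type} [DecidableEq α]

def rename (a b : α) (c : α) : α := if c = a then b else c

theorem rename_eq_rename_iff {a b c d : α} (hc : c ≠ b) (hd : d ≠ b) :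
    rename a b c = rename a b d ↔ c = d := by
  unfold rename
  split_ifs <;> simp_all [eq_comm]

theorem rename_mem_map_rename_iff {a b c : α} {l : List α} (hb : b ∉ l) (hc : c ≠ b) :
    rename a b c ∈ l.map (rename a b) ↔ c ∈ l := by
  simp only [mem_map]
  refine ⟨fun ⟨d, hd, h⟩ => ?_, fun h => ⟨c, h, rfl⟩⟩
  rwa [← (rename_eq_rename_iff (ne_of_mem_of_not_mem hd hb) hc).1 h]

theorem map_rename_rename {a b : α} {l : List α} (hb : b ∉ l) :
    (l.map (rename a b)).map (rename b a) = l := by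
  rw [map_map]
  refine (map_congr_left fun c hc => ?_).trans (map_id l)
  have : c ≠ b := fun h => hb (h ▸ hc)
  by_cases hca : c = a <;> simp [rename, *]

theorem map_rename_of_not_mem {a b : α} {l : List α} (ha : a ∉ l) : l.map (rename a b) = l := by
  refine (map_congr_left fun c hc => ?_).trans (map_id l)
  have : c ≠ a := fun h => ha (h ▸ hc)
  simp [rename, this]

end Rename

section Permitting

variable {N T : Type} {P : Set (PermProd N T)}

@[simp] theorem mem_alph {α : Type} {a : α} {w : List α} : a ∈ alph w ↔ a ∈ w := Iff.rfl

def CDGS.Step (Γ : CDGS N T) (s₁ s₂ : List (Symb N T)) : Prop := ∃ P ∈ Γ.comps, TStep P s₁ s₂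

theorem PStep.mem_or_rewritten {s t : List (Symb N T)} (h : PStep P s t) {a : Symb N T}
    (ha : a ∈ s) : a ∈ t ∨ ∃ q ∈ P, Sum.inl q.1 = a ∧ q.2.1 ⊆ t := by
  obtain ⟨A, x, Per, u, v, hq, rfl, rfl, -⟩ := h
  simp only [mem_append, mem_cons] at ha
  rcases ha with ha | rfl | ha
  · simp [ha]
  · exact .inr ⟨_, hq, rfl, fun b hb => by simp [hb]⟩
  · simp [ha]

theorem PStep.mem_of_lhs_ne {B : N} (hB : ∀ q ∈ P, q.1 ≠ B) {s t : List (Symb N T)}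
    (h : PStep P s t) (hs : Sum.inl B ∈ s) : Sum.inl B ∈ t := by
  rcases h.mem_or_rewritten hs with ht | ⟨q, hq, hqB, -⟩
  · exact ht
  · exact absurd (Sum.inl_injective hqB) (hB q hq)

theorem TStep.induction {I : List (Symb N T) → Prop} {s s' : List (Symb N T)}
    (h : TStep P s s') (h₀ : ∀ t, PStep P s t → I t)
    (h₁ : ∀ t t', PStep P t t' → I t → I t') : I s' := by
  obtain ⟨t, hst, ht⟩ := TransGen.head'_iff.1 h.1
  clear h
  induction ht with
  | refl => exact h₀ t hst
  | tail _ hstep ih => exact h₁ _ _ hstep ih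

theorem TStep.not_of_forall_not_pStep {s s' : List (Symb N T)} (hs : ∀ t, ¬ PStep P s t) :
    ¬ TStep P s s' :=
  fun h => TStep.induction (I := fun _ => False) h (fun t ht => hs t ht) fun _ _ _ => id

theorem TStep.mem_of_trap {F M : N} (hF : ∀ q ∈ P, q.1 ≠ F) (htrap : (M, [Sum.inl F], ∅) ∈ P)
    (hM : ∀ q ∈ P, q.1 = M → Sum.inl F ∈ q.2.1) {s s' : List (Symb N T)} (hs : Sum.inl M ∈ s)
    (h : TStep P s s') : Sum.inl F ∈ s' := by
  have hstep : ∀ t t', PStep P t t' → Sum.inl F ∈ t ∨ Sum.inl M ∈ t →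
      Sum.inl F ∈ t' ∨ Sum.inl M ∈ t' := by
    rintro t t' hs (hFt | hMt)
    · exact .inl (hs.mem_of_lhs_ne hF hFt)
    · rcases hs.mem_or_rewritten hMt with hMt' | ⟨q, hq, hqM, hsub⟩
      · exact .inr hMt'
      · exact .inl (hsub (hM q hq (Sum.inl_injective hqM)))
  rcases h.induction (fun t ht => hstep _ t ht (.inr hs)) hstep with hF' | hM'
  · exact hF'
  · obtain ⟨u, v, rfl⟩ := append_of_mem hM'
    exact absurd ⟨_, _, _, u, v, htrap, rfl, rfl, by simp⟩ (h.2 (u ++ [Sum.inl F] ++ v))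

theorem reflTransGen_pStep_map_rename [DecidableEq (Symb N T)] {A : N} {b : Symb N T}
    {Per : Set N} (hq : (A, [b], Per) ∈ P) :
    ∀ (w pre suf : List (Symb N T)), (∀ B ∈ Per, Sum.inl B ∈ pre ++ suf) →
      ReflTransGen (PStep P) (pre ++ w ++ suf) (pre ++ w.map (rename (.inl A) b) ++ suf) := by
  intro w
  induction w with
  | nil => intro pre suf _; simp only [map_nil]; exact .refl
  | cons a w ih =>
    intro pre suf hPer
    have hPer' : ∀ c, ∀ B ∈ Per, Sum.inl B ∈ (pre ++ [c]) ++ suf := fun c B hB => by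
      rcases mem_append.1 (hPer B hB) with h | h <;> simp [h]
    by_cases ha : a = .inl A
    · subst ha
      refine .head ⟨A, [b], Per, pre, w ++ suf, hq, by simp, rfl, fun B hB => ?_⟩ ?_
      · rcases mem_append.1 (hPer B hB) with h | h <;> simp [h]
      · simpa [rename] using ih (pre ++ [b]) suf (hPer' b)
    · simpa [rename, ha] using ih (pre ++ [a]) suf (hPer' a)

end Permitting

namespace RCG

open scoped Classical

noncomputable section

variable {N T : Type}

abbrev Rule (N T : Type) := N × List (Symb N T) × Set N × Set N

inductive Marker (N T : Type) where
  | fail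
  | parked (r : Rule N T)
  | check (r : Rule N T) (n : ℕ)

abbrev ExtSymb (N T : Type) := Symb (N ⊕ Marker N T) T

abbrev mark (m : Marker N T) : ExtSymb N T := .inl (.inr m)

def emb : Symb N T → ExtSymb N T := Sum.map .inl id

@[simp] theorem emb_inl (B : N) : (emb (.inl B) : ExtSymb N T) = .inl (.inl B) := rfl

@[simp] theorem emb_inr (a : T) : (emb (.inr a) : ExtSymb N T) = .inr a := rfl

theorem emb_injective : Function.Injective (emb : Symb N T → ExtSymb N T) :=
  Sum.map_injective.2 ⟨Sum.inl_injective, fun _ _ => id⟩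

@[simp] theorem emb_ne_mark (a : Symb N T) (m : Marker N T) : emb a ≠ mark m := by
  cases a <;> simp

@[simp] theorem mark_not_mem_map_emb (m : Marker N T) (w : List (Symb N T)) :
    mark m ∉ w.map emb := by
  simp

theorem map_emb_eq_append_cons {w : List (Symb N T)} {X Y : List (ExtSymb N T)} {B : N}
    (h : w.map emb = X ++ .inl (.inl B) :: Y) :
    ∃ u v, w = u ++ .inl B :: v ∧ X = u.map emb ∧ Y = v.map emb := by
  obtain ⟨u, w', rfl, rfl, h'⟩ := map_eq_append_iff.1 h
  obtain ⟨a, v, rfl, ha, rfl⟩ := map_eq_cons_iff.1 h'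
  obtain rfl : a = .inl B := emb_injective ha
  exact ⟨u, v, rfl, rfl, rfl⟩

variable {G : RCG N T} {r : Rule N T} {u v : List (Symb N T)}

/-! ### Conditions of a rule -/

def SententialForm (G : RCG N T) (w : List (Symb N T)) : Prop :=
  ReflTransGen (G.Step false) [.inl G.start] w

def allRules (G : RCG N T) : List (Rule N T) := G.fin.toFinset.toList

def reach (G : RCG N T) : List N :=
  G.start :: (allRules G).flatMap fun r => r.2.1.filterMap Sum.getLeft?

theorem mem_reach_of_sententialForm {w : List (Symb N T)} (hw : G.SententialForm w) {B : N}
    (hB : .inl B ∈ w) : B ∈ reach G := by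
  induction hw generalizing B with
  | refl => simp_all [reach]
  | tail _ hstep ih =>
    obtain ⟨A, x, Per, For, u, v, hr, rfl, rfl, -⟩ := hstep
    simp only [mem_append, mem_cons] at hB ih
    rcases hB with (hB | hB) | hB
    · exact ih (.inl hB)
    · refine mem_cons_of_mem _ (mem_flatMap.2 ⟨(A, x, Per, For), ?_, ?_⟩)
      · simpa [allRules] using hr
      · exact mem_filterMap.2 ⟨_, hB, rfl⟩
    · exact ih (.inr (.inr hB))

/-- The rules that can ever be applied: a permitting set outside `reach G` is never met. -/
def liveRules (G : RCG N T) : List (Rule N T) :=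
  (allRules G).filter fun r => decide (∀ B ∈ r.2.2.1, B ∈ reach G)

theorem mem_liveRules : r ∈ liveRules G ↔ r ∈ G.rules ∧ ∀ B ∈ r.2.2.1, B ∈ reach G := by
  simp [liveRules, allRules]

inductive Check (N : Type) where
  | present (B : N)
  | absent (B : N)

def Check.Holds : Check N → List (Symb N T) → Prop
  | .present B, w => .inl B ∈ w
  | .absent B, w => .inl B ∉ w

def checks (G : RCG N T) (r : Rule N T) : List (Check N) :=
  ((reach G).filter (· ∈ r.2.2.1)).map .present ++ ((reach G).filter (· ∈ r.2.2.2)).map .absent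

theorem forall_checks_holds_iff (hr : r ∈ liveRules G)
    (huv : G.SententialForm (u ++ .inl r.1 :: v)) :
    (∀ c ∈ checks G r, c.Holds (u ++ v)) ↔
      (∀ B ∈ r.2.2.1, .inl B ∈ u ++ v) ∧ ∀ B ∈ r.2.2.2, .inl B ∉ u ++ v := by
  have hreach : ∀ B, .inl B ∈ u ++ v → B ∈ reach G := fun B hB =>
    mem_reach_of_sententialForm huv (by simp only [mem_append, mem_cons] at hB ⊢; tauto)
  simp only [checks, mem_append, mem_map, mem_filter, decide_eq_true_eq] at hreach ⊢
  constructor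
  · intro h
    refine ⟨fun B hB => ?_, fun B hB hBuv => ?_⟩
    · exact mem_append.1 (h (.present B) (.inl ⟨B, ⟨(mem_liveRules.1 hr).2 B hB, hB⟩, rfl⟩))
    · exact h (.absent B) (.inr ⟨B, ⟨hreach B hBuv, hB⟩, rfl⟩) (mem_append.2 hBuv)
  · rintro ⟨hPer, hFor⟩ c (⟨B, ⟨-, hB⟩, rfl⟩ | ⟨B, ⟨-, hB⟩, rfl⟩)
    · exact mem_append.2 (hPer B hB)
    · exact fun h => hFor B hB (mem_append.1 h)

theorem step_of_forall_checks_holds (hr : r ∈ liveRules G)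
    (huv : G.SententialForm (u ++ .inl r.1 :: v)) (h : ∀ c ∈ checks G r, c.Holds (u ++ v)) :
    G.Step false (u ++ .inl r.1 :: v) (u ++ r.2.1 ++ v) :=
  have ⟨hPer, hFor⟩ := (forall_checks_holds_iff hr huv).1 h
  ⟨r.1, r.2.1, r.2.2.1, r.2.2.2, u, v, (mem_liveRules.1 hr).1, rfl, rfl, hPer, hFor⟩

theorem exists_forall_checks_holds_of_step {s₁ s₂ : List (Symb N T)} (hs : G.SententialForm s₁)
    (h : G.Step false s₁ s₂) :
    ∃ r ∈ liveRules G, ∃ u v, s₁ = u ++ .inl r.1 :: v ∧ s₂ = u ++ r.2.1 ++ v ∧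
      ∀ c ∈ checks G r, c.Holds (u ++ v) := by
  obtain ⟨A, x, Per, For, u, v, hr, rfl, rfl, hPer, hFor⟩ := h
  have hr' : (A, x, Per, For) ∈ liveRules G :=
    mem_liveRules.2 ⟨hr, fun B hB => mem_reach_of_sententialForm hs <| by
      have := hPer B hB
      simp only [Bool.false_eq_true, if_false, mem_alph, mem_append, mem_cons] at this ⊢
      tauto⟩
  exact ⟨_, hr', u, v, rfl, rfl, (forall_checks_holds_iff hr' hs).2 ⟨hPer, hFor⟩⟩

/-! ### Parked words and stages -/

def park (r : Rule N T) : ExtSymb N T → ExtSymb N T := rename (.inl (.inl r.1)) (mark (.parked r))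

def unpark (r : Rule N T) : ExtSymb N T → ExtSymb N T := rename (mark (.parked r)) (.inl (.inl r.1))

def parkWord (r : Rule N T) (w : List (Symb N T)) : List (ExtSymb N T) := (w.map emb).map (park r)

/-- A check for `B` looks for `parkN r B`, since in a parked word every `r.1` is parked. -/
def parkN (r : Rule N T) (B : N) : N ⊕ Marker N T := if B = r.1 then .inr (.parked r) else .inl B

theorem inl_parkN (r : Rule N T) (B : N) :
    (.inl (parkN r B) : ExtSymb N T) = park r (.inl (.inl B)) := by
  by_cases h : B = r.1 <;> simp [parkN, park, rename, h]

theorem parkWord_append (r : Rule N T) (u v : List (Symb N T)) :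
    parkWord r (u ++ v) = parkWord r u ++ parkWord r v := by
  simp [parkWord]

theorem eq_parked_of_mark_mem_parkWord {w : List (Symb N T)} {m : Marker N T}
    (h : mark m ∈ parkWord r w) : m = .parked r := by
  obtain ⟨_, ⟨a, -, rfl⟩, h⟩ := by simpa only [parkWord, mem_map] using h
  cases a <;> simp only [park, rename, emb] at h <;> split_ifs at h <;> simp_all

theorem lhs_not_mem_parkWord (r : Rule N T) (w : List (Symb N T)) :
    .inl (.inl r.1) ∉ parkWord r w := by
  simp only [parkWord, mem_map]
  rintro ⟨_, ⟨a, -, rfl⟩, h⟩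
  cases a <;> simp only [park, rename, emb] at h <;> split_ifs at h <;> simp_all

theorem inl_parkN_mem_parkWord_iff (r : Rule N T) (w : List (Symb N T)) (B : N) :
    .inl (parkN r B) ∈ parkWord r w ↔ .inl B ∈ w := by
  rw [inl_parkN, parkWord, park, rename_mem_map_rename_iff (by simp) (by simp)]
  exact mem_map_of_injective (a := .inl B) emb_injective

theorem inl_parkN_mem_parkWord_append_iff {B : N} :
    .inl (parkN r B) ∈ parkWord r u ++ parkWord r v ↔ .inl B ∈ u ++ v := by
  rw [← parkWord_append, inl_parkN_mem_parkWord_iff]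

theorem map_unpark_parkWord (r : Rule N T) (w : List (Symb N T)) :
    (parkWord r w).map (unpark r) = w.map emb :=
  map_rename_rename (by simp)

def stageWord (r : Rule N T) (u v : List (Symb N T)) (n : ℕ) : List (ExtSymb N T) :=
  parkWord r u ++ mark (.check r n) :: parkWord r v

theorem mark_mem_stageWord {n : ℕ} {m : Marker N T} (h : mark m ∈ stageWord r u v n) :
    m = .parked r ∨ m = .check r n := by
  simp only [stageWord, mem_append, mem_cons] at h
  rcases h with h | h | h
  · exact .inl (eq_parked_of_mark_mem_parkWord h)
  · simp_all
  · exact .inl (eq_parked_of_mark_mem_parkWord h)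

theorem lhs_not_mem_stageWord (r : Rule N T) (u v : List (Symb N T)) (n : ℕ) :
    .inl (.inl r.1) ∉ stageWord r u v n := by
  simp [stageWord, lhs_not_mem_parkWord]

theorem stageWord_eq_append_cons {n : ℕ} {X Y : List (ExtSymb N T)} {m : Marker N T}
    (h : stageWord r u v n = X ++ mark m :: Y) (hm : m ≠ .parked r) :
    m = .check r n ∧ X = parkWord r u ∧ Y = parkWord r v := by
  have hmem : mark m ∈ stageWord r u v n := h ▸ mem_append_right _ mem_cons_self
  obtain rfl := (mark_mem_stageWord hmem).resolve_left hm
  have hnot : ∀ w, mark (.check r n) ∉ parkWord r w := fun w h' =>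
    by simpa using eq_parked_of_mark_mem_parkWord h'
  obtain ⟨h₁, -, h₂⟩ := (append_cons_inj_of_notMem (hnot u) (hnot v)).1 h
  exact ⟨rfl, h₁.symm, h₂.symm⟩

def IsStage (G : RCG N T) (t : List (ExtSymb N T)) : Prop :=
  ∃ r ∈ liveRules G, ∃ u v n, G.SententialForm (u ++ .inl r.1 :: v) ∧
    n ≤ (checks G r).length ∧ (∀ c ∈ (checks G r).take n, c.Holds (u ++ v)) ∧
    t = stageWord r u v n

def Admissible (G : RCG N T) (t : List (ExtSymb N T)) : Prop :=
  mark .fail ∈ t ∨ (∃ w, G.SententialForm w ∧ t = w.map emb) ∨ IsStage G t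

/-! ### Components with traps -/

def trap (m : Marker N T) : PermProd (N ⊕ Marker N T) T := (.inr m, [mark .fail], ∅)

def markers (G : RCG N T) : List (Marker N T) :=
  (liveRules G).flatMap fun r => .parked r :: (range ((checks G r).length + 1)).map (.check r)

theorem check_mem_markers (hr : r ∈ liveRules G) {n : ℕ} (hn : n ≤ (checks G r).length) :
    .check r n ∈ markers G :=
  mem_flatMap.2 ⟨r, hr, mem_cons_of_mem _ (mem_map.2 ⟨n, mem_range.2 (by omega), rfl⟩)⟩

theorem fail_not_mem_markers (G : RCG N T) : .fail ∉ markers G := by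
  simp [markers]

def withTraps (G : RCG N T) (own : List (Marker N T)) (core : Set (PermProd (N ⊕ Marker N T) T)) :
    Set (PermProd (N ⊕ Marker N T) T) :=
  core ∪ {q | ∃ m ∈ markers G, m ∉ own ∧ q = trap m}

def OwnsLhs (own : List (Marker N T)) (core : Set (PermProd (N ⊕ Marker N T) T)) : Prop :=
  ∀ q ∈ core, ∀ m, q.1 = .inr m → m ∈ own

section WithTraps

variable {own : List (Marker N T)} {core : Set (PermProd (N ⊕ Marker N T) T)}

theorem forall_mem_withTraps {p : PermProd (N ⊕ Marker N T) T → Prop} (hcore : ∀ q ∈ core, p q)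
    (htrap : ∀ m, p (trap m)) : ∀ q ∈ withTraps G own core, p q := by
  rintro q (hq | ⟨m, -, -, rfl⟩)
  exacts [hcore q hq, htrap m]

theorem withTraps_finite (hcore : core.Finite) : (withTraps G own core).Finite := by
  refine hcore.union (((markers G).finite_toSet.image trap).subset ?_)
  rintro _ ⟨m, hm, -, rfl⟩
  exact ⟨m, hm, rfl⟩

theorem withTraps_lhs_ne_fail (hcore : OwnsLhs own core) (hfail : .fail ∉ own) :
    ∀ q ∈ withTraps G own core, q.1 ≠ .inr .fail := by
  rintro q (hq | ⟨m, hm, -, rfl⟩) h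
  · exact hfail (hcore q hq _ h)
  · simp only [trap, Sum.inr.injEq] at h
    exact fail_not_mem_markers G (h ▸ hm)

theorem fail_mem_of_tStep_withTraps (hcore : OwnsLhs own core) (hfail : .fail ∉ own)
    {s s' : List (ExtSymb N T)} (hs : mark .fail ∈ s) (h : TStep (withTraps G own core) s s') :
    mark .fail ∈ s' :=
  have hF := withTraps_lhs_ne_fail hcore hfail
  h.induction (fun _ ht => ht.mem_of_lhs_ne hF hs) fun _ _ ht => ht.mem_of_lhs_ne hF

theorem fail_mem_of_tStep_withTraps_stageWord (hcore : OwnsLhs own core) (hfail : .fail ∉ own)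
    (hr : r ∈ liveRules G) {n : ℕ} (hn : n ≤ (checks G r).length) (hown : .check r n ∉ own)
    {t' : List (ExtSymb N T)} (h : TStep (withTraps G own core) (stageWord r u v n) t') :
    mark .fail ∈ t' := by
  refine h.mem_of_trap (withTraps_lhs_ne_fail hcore hfail)
    (.inr ⟨_, check_mem_markers hr hn, hown, rfl⟩) ?_ (by simp [stageWord])
  rintro q (hq | ⟨m, -, -, rfl⟩) hqM
  · exact absurd (hcore q hq _ hqM) hown
  · simp [trap]

theorem pStep_core_of_pStep_withTraps {s t : List (ExtSymb N T)}
    (hs : ∀ m, mark m ∈ s → m ∈ own) (h : PStep (withTraps G own core) s t) : PStep core s t := by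
  obtain ⟨A, x, Per, u, v, hq | ⟨m, -, hm, hq⟩, rfl, rfl, hPer⟩ := h
  · exact ⟨A, x, Per, u, v, hq, rfl, rfl, hPer⟩
  · simp only [trap, Prod.mk.injEq] at hq
    obtain ⟨rfl, -, -⟩ := hq
    exact absurd (hs m (by simp)) hm

theorem not_pStep_withTraps_map_emb (hcore : ∀ q ∈ core, ∃ m, q.1 = .inr m)
    (w : List (Symb N T)) (t : List (ExtSymb N T)) :
    ¬ PStep (withTraps G own core) (w.map emb) t := by
  intro h
  obtain ⟨A, x, Per, u, v, hq, hw, -⟩ :=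
    pStep_core_of_pStep_withTraps (fun m hm => absurd hm (by simp)) h
  obtain ⟨m, rfl⟩ := hcore _ hq
  exact mark_not_mem_map_emb m w (hw ▸ by simp)

end WithTraps

/-! ### Selection -/

def selectCore (r : Rule N T) : Set (PermProd (N ⊕ Marker N T) T) :=
  {(.inl r.1, [mark (.check r 0)], ∅),
   (.inl r.1, [mark (.parked r)], {.inr (.check r 0)}),
   (.inr (.check r 0), [mark .fail], {.inr (.check r 0)})}

def selectComp (G : RCG N T) (r : Rule N T) : Set (PermProd (N ⊕ Marker N T) T) :=
  withTraps G [.parked r, .check r 0] (selectCore r)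

theorem selectCore_ownsLhs (r : Rule N T) : OwnsLhs [.parked r, .check r 0] (selectCore r) := by
  simp [OwnsLhs, selectCore]

def unselect (r : Rule N T) : ExtSymb N T → ExtSymb N T :=
  unpark r ∘ rename (mark (.check r 0)) (.inl (.inl r.1))

@[simp] theorem unselect_check_zero (r : Rule N T) :
    unselect r (mark (.check r 0)) = .inl (.inl r.1) := by
  simp [unselect, unpark, rename]

@[simp] theorem unselect_parked (r : Rule N T) :
    unselect r (mark (.parked r)) = .inl (.inl r.1) := by
  simp [unselect, unpark, rename]

@[simp] theorem unselect_lhs (r : Rule N T) : unselect r (.inl (.inl r.1)) = .inl (.inl r.1) := by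
  simp [unselect, unpark, rename]

theorem map_unselect_map_emb (r : Rule N T) (w : List (Symb N T)) :
    (w.map emb).map (unselect r) = w.map emb := by
  rw [unselect, ← map_map, map_rename_of_not_mem (by simp), unpark,
    map_rename_of_not_mem (by simp)]

theorem mem_own_of_map_unselect {t : List (ExtSymb N T)} {w : List (Symb N T)}
    (ht : t.map (unselect r) = w.map emb) {m : Marker N T} (hm : mark m ∈ t) :
    m ∈ [.parked r, .check r 0] := by
  by_contra hown
  have hfix : unselect r (mark m) = mark m := by
    simp only [mem_cons, not_mem_nil, or_false, not_or] at hown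
    simp [unselect, unpark, rename, hown.1, hown.2]
  exact mark_not_mem_map_emb m w (ht ▸ hfix ▸ mem_map_of_mem hm)

theorem eq_parkWord_of_map_unselect {W : List (ExtSymb N T)} (h : W.map (unselect r) = u.map emb)
    (hA : .inl (.inl r.1) ∉ W) (hc : mark (.check r 0) ∉ W) : W = parkWord r u := by
  rw [parkWord, ← h, map_map]
  refine ((map_congr_left fun b hb => ?_).trans (map_id W)).symm
  have hbA : b ≠ .inl (.inl r.1) := ne_of_mem_of_not_mem hb hA
  have hbc : b ≠ mark (.check r 0) := ne_of_mem_of_not_mem hb hc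
  by_cases hbp : b = mark (.parked r)
  · subst hbp; simp [park, rename]
  · simp [unselect, unpark, park, rename, hbA, hbc, hbp]

theorem pStep_selectComp_of_map_unselect {w : List (Symb N T)} {t t' : List (ExtSymb N T)}
    (ht : t.map (unselect r) = w.map emb) (h : PStep (selectComp G r) t t') :
    mark .fail ∈ t' ∨ (t'.map (unselect r) = w.map emb ∧ mark (.check r 0) ∈ t') := by
  obtain ⟨A, x, Per, X, Y, hq, rfl, rfl, hPer⟩ :=
    pStep_core_of_pStep_withTraps (fun m hm => mem_own_of_map_unselect ht hm) h
  simp only [selectCore, Set.mem_insert_iff, Set.mem_singleton_iff, Prod.mk.injEq] at hq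
  rcases hq with ⟨rfl, rfl, rfl⟩ | ⟨rfl, rfl, rfl⟩ | ⟨rfl, rfl, rfl⟩
  · right
    simp_all
  · right
    simp only [Set.mem_singleton_iff, forall_eq, mem_alph, mem_append] at hPer
    simp_all
  · left
    simp

theorem admissible_of_tStep_selectComp_map_emb (hr : r ∈ liveRules G) {w : List (Symb N T)}
    (hw : G.SententialForm w) {t' : List (ExtSymb N T)}
    (h : TStep (selectComp G r) (w.map emb) t') : Admissible G t' := by
  have hF := withTraps_lhs_ne_fail (G := G) (selectCore_ownsLhs r) (by simp)
  have hrun := h.induction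
    (I := fun t => mark .fail ∈ t ∨ (t.map (unselect r) = w.map emb ∧ mark (.check r 0) ∈ t))
    (fun t ht => pStep_selectComp_of_map_unselect (map_unselect_map_emb r w) ht)
    fun t t' ht => by
      rintro (hfail | ⟨hmap, -⟩)
      exacts [.inl (ht.mem_of_lhs_ne hF hfail), pStep_selectComp_of_map_unselect hmap ht]
  rcases hrun with hfail | ⟨hmap, hck⟩
  · exact .inl hfail
  have hA : .inl (.inl r.1) ∉ t' := fun hA => by
    obtain ⟨X, Y, rfl⟩ := append_of_mem hA
    exact h.2 _ ⟨.inl r.1, [mark (.check r 0)], ∅, X, Y, .inl (by simp [selectCore]), rfl, rfl,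
      by simp⟩
  obtain ⟨X, Y, rfl⟩ := append_of_mem hck
  have hXY : mark (.check r 0) ∉ X ++ Y := fun hmem =>
    h.2 _ ⟨.inr (.check r 0), [mark .fail], {.inr (.check r 0)}, X, Y,
      .inl (by simp [selectCore]), rfl, rfl, by simpa using hmem⟩
  simp only [map_append, map_cons, unselect_check_zero] at hmap
  obtain ⟨u, v, rfl, hX, hY⟩ := map_emb_eq_append_cons hmap.symm
  simp only [mem_append, mem_cons, not_or] at hA hXY
  refine .inr (.inr ⟨r, hr, u, v, 0, hw, by simp, by simp, ?_⟩)
  rw [stageWord, eq_parkWord_of_map_unselect hX hA.1 hXY.1,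
    eq_parkWord_of_map_unselect hY hA.2.2 hXY.2]

theorem not_pStep_selectComp_stageWord (t : List (ExtSymb N T)) :
    ¬ PStep (selectComp G r) (stageWord r u v 0) t := by
  intro h
  obtain ⟨A, x, Per, X, Y, hq, hs, -, hPer⟩ :=
    pStep_core_of_pStep_withTraps (fun m hm => by simpa using mark_mem_stageWord hm) h
  simp only [selectCore, Set.mem_insert_iff, Set.mem_singleton_iff, Prod.mk.injEq] at hq
  rcases hq with ⟨rfl, rfl, rfl⟩ | ⟨rfl, rfl, rfl⟩ | ⟨rfl, rfl, rfl⟩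
  · exact lhs_not_mem_stageWord r u v 0 (hs ▸ by simp)
  · exact lhs_not_mem_stageWord r u v 0 (hs ▸ by simp)
  · obtain ⟨-, rfl, rfl⟩ := stageWord_eq_append_cons (m := .check r 0) hs (by simp)
    simp only [Set.mem_singleton_iff, forall_eq, mem_alph, mem_append] at hPer
    rcases hPer with h' | h' <;> simpa using eq_parked_of_mark_mem_parkWord h'

theorem tStep_selectComp_map_emb :
    TStep (selectComp G r) ((u ++ .inl r.1 :: v).map emb) (stageWord r u v 0) := by
  refine ⟨.head' (b := u.map emb ++ [mark (.check r 0)] ++ v.map emb)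
    ⟨.inl r.1, [mark (.check r 0)], ∅, u.map emb, v.map emb, .inl (by simp [selectCore]),
      by simp, rfl, by simp⟩ ?_,
    not_pStep_selectComp_stageWord⟩
  have hpark : (.inl r.1, [mark (.parked r)], {.inr (.check r 0)}) ∈ selectComp G r :=
    .inl (by simp [selectCore])
  have hu := reflTransGen_pStep_map_rename hpark (u.map emb) [] (mark (.check r 0) :: v.map emb)
    (by simp)
  have hv := reflTransGen_pStep_map_rename hpark (v.map emb) (parkWord r u ++ [mark (.check r 0)])
    [] (by simp)
  simp only [nil_append, append_nil, append_assoc, singleton_append] at hu hv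
  simpa [stageWord, parkWord, park] using hu.trans hv

/-! ### Checks -/

def checkCore (r : Rule N T) (n : ℕ) : Check N → Set (PermProd (N ⊕ Marker N T) T)
  | .present B => {(.inr (.check r n), [mark (.check r (n + 1))], {parkN r B})}
  | .absent B => {(.inr (.check r n), [mark (.check r (n + 1))], ∅),
      (.inr (.check r (n + 1)), [mark .fail], {parkN r B})}

def checkComp (G : RCG N T) (r : Rule N T) (n : ℕ) (c : Check N) :
    Set (PermProd (N ⊕ Marker N T) T) :=
  withTraps G [.parked r, .check r n, .check r (n + 1)] (checkCore r n c)

theorem checkCore_ownsLhs (r : Rule N T) (n : ℕ) (c : Check N) :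
    OwnsLhs [.parked r, .check r n, .check r (n + 1)] (checkCore r n c) := by
  cases c <;> simp [OwnsLhs, checkCore]

theorem checkCore_lhs_mark (r : Rule N T) (n : ℕ) (c : Check N) :
    ∀ q ∈ checkCore r n c, ∃ m, q.1 = .inr m := by
  cases c <;> simp [checkCore]

theorem pStep_checkCore_of_pStep_checkComp {n k : ℕ} (hk : k = n ∨ k = n + 1) {c : Check N}
    {t : List (ExtSymb N T)} (h : PStep (checkComp G r n c) (stageWord r u v k) t) :
    PStep (checkCore r n c) (stageWord r u v k) t :=
  pStep_core_of_pStep_withTraps (fun m hm => by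
    rcases mark_mem_stageWord hm with rfl | rfl <;> rcases hk with rfl | rfl <;> simp) h

theorem pStep_checkComp_stageWord {n : ℕ} {c : Check N} {t : List (ExtSymb N T)}
    (h : PStep (checkComp G r n c) (stageWord r u v n) t) :
    t = stageWord r u v (n + 1) ∧ ∀ B, c = .present B → .inl B ∈ u ++ v := by
  obtain ⟨A, x, Per, X, Y, hq, hs, rfl, hPer⟩ := pStep_checkCore_of_pStep_checkComp (.inl rfl) h
  cases c with
  | present B =>
    simp only [checkCore, Set.mem_singleton_iff, Prod.mk.injEq] at hq
    obtain ⟨rfl, rfl, rfl⟩ := hq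
    obtain ⟨-, rfl, rfl⟩ := stageWord_eq_append_cons (m := .check r n) hs (by simp)
    simp only [Set.mem_singleton_iff, forall_eq, mem_alph,
      inl_parkN_mem_parkWord_append_iff] at hPer
    exact ⟨by simp [stageWord], fun B' hB' => by cases hB'; exact hPer⟩
  | absent B =>
    simp only [checkCore, Set.mem_insert_iff, Set.mem_singleton_iff, Prod.mk.injEq] at hq
    rcases hq with ⟨rfl, rfl, rfl⟩ | ⟨rfl, rfl, rfl⟩
    · obtain ⟨-, rfl, rfl⟩ := stageWord_eq_append_cons (m := .check r n) hs (by simp)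
      exact ⟨by simp [stageWord], fun _ h => by cases h⟩
    · simpa using (stageWord_eq_append_cons (m := .check r (n + 1)) hs (by simp)).1

theorem pStep_checkComp_stageWord_succ {n : ℕ} {c : Check N} {t : List (ExtSymb N T)}
    (h : PStep (checkComp G r n c) (stageWord r u v (n + 1)) t) :
    ∃ B, c = .absent B ∧ .inl B ∈ u ++ v ∧ mark .fail ∈ t := by
  obtain ⟨A, x, Per, X, Y, hq, hs, rfl, hPer⟩ := pStep_checkCore_of_pStep_checkComp (.inr rfl) h
  cases c with
  | present B =>
    simp only [checkCore, Set.mem_singleton_iff, Prod.mk.injEq] at hq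
    obtain ⟨rfl, rfl, rfl⟩ := hq
    simpa using (stageWord_eq_append_cons (m := .check r n) hs (by simp)).1
  | absent B =>
    simp only [checkCore, Set.mem_insert_iff, Set.mem_singleton_iff, Prod.mk.injEq] at hq
    rcases hq with ⟨rfl, rfl, rfl⟩ | ⟨rfl, rfl, rfl⟩
    · simpa using (stageWord_eq_append_cons (m := .check r n) hs (by simp)).1
    · obtain ⟨-, rfl, rfl⟩ := stageWord_eq_append_cons (m := .check r (n + 1)) hs (by simp)
      simp only [Set.mem_singleton_iff, forall_eq, mem_alph,
        inl_parkN_mem_parkWord_append_iff] at hPer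
      exact ⟨B, rfl, hPer, by simp⟩

theorem not_pStep_checkComp_stageWord_succ {n : ℕ} {c : Check N} (hc : c.Holds (u ++ v))
    (t : List (ExtSymb N T)) : ¬ PStep (checkComp G r n c) (stageWord r u v (n + 1)) t := by
  intro h
  obtain ⟨B, rfl, hB, -⟩ := pStep_checkComp_stageWord_succ h
  exact hc hB

theorem tStep_checkComp_stageWord {n : ℕ} {c : Check N} {t' : List (ExtSymb N T)}
    (h : TStep (checkComp G r n c) (stageWord r u v n) t') :
    mark .fail ∈ t' ∨ (t' = stageWord r u v (n + 1) ∧ c.Holds (u ++ v)) := by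
  have hF := withTraps_lhs_ne_fail (G := G) (checkCore_ownsLhs r n c) (by simp)
  have hrun := h.induction (I := fun t => mark .fail ∈ t ∨
      (t = stageWord r u v (n + 1) ∧ ∀ B, c = .present B → .inl B ∈ u ++ v))
    (fun t ht => .inr (pStep_checkComp_stageWord ht))
    fun t t' ht => by
      rintro (hfail | ⟨rfl, -⟩)
      · exact .inl (ht.mem_of_lhs_ne hF hfail)
      · obtain ⟨B, -, -, hfail⟩ := pStep_checkComp_stageWord_succ ht
        exact .inl hfail
  rcases hrun with hfail | ⟨rfl, hpresent⟩
  · exact .inl hfail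
  refine .inr ⟨rfl, ?_⟩
  cases c with
  | present B => exact hpresent B rfl
  | absent B =>
    intro hB
    exact h.2 _ ⟨.inr (.check r (n + 1)), [mark .fail], {parkN r B}, parkWord r u, parkWord r v,
      .inl (by simp [checkCore]), rfl, rfl, by
        simpa only [Set.mem_singleton_iff, forall_eq, mem_alph]
          using inl_parkN_mem_parkWord_append_iff.2 hB⟩

theorem tStep_checkComp_stageWord_succ {n : ℕ} {c : Check N} (hc : c.Holds (u ++ v)) :
    TStep (checkComp G r n c) (stageWord r u v n) (stageWord r u v (n + 1)) := by
  refine ⟨.single ?_, not_pStep_checkComp_stageWord_succ hc⟩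
  cases c with
  | present B =>
    exact ⟨.inr (.check r n), [mark (.check r (n + 1))], {parkN r B}, parkWord r u, parkWord r v,
      .inl (by simp [checkCore]), rfl, by simp [stageWord], by
        simpa only [Set.mem_singleton_iff, forall_eq, mem_alph]
          using inl_parkN_mem_parkWord_append_iff.2 hc⟩
  | absent B =>
    exact ⟨.inr (.check r n), [mark (.check r (n + 1))], ∅, parkWord r u, parkWord r v,
      .inl (by simp [checkCore]), rfl, by simp [stageWord], by simp⟩

/-! ### Replacement -/

def replaceCore (G : RCG N T) (r : Rule N T) : Set (PermProd (N ⊕ Marker N T) T) :=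
  {(.inr (.check r (checks G r).length), r.2.1.map emb, ∅),
   (.inr (.parked r), [.inl (.inl r.1)], ∅)}

def replaceComp (G : RCG N T) (r : Rule N T) : Set (PermProd (N ⊕ Marker N T) T) :=
  withTraps G [.parked r, .check r (checks G r).length] (replaceCore G r)

theorem replaceCore_ownsLhs (G : RCG N T) (r : Rule N T) :
    OwnsLhs [.parked r, .check r (checks G r).length] (replaceCore G r) := by
  simp [OwnsLhs, replaceCore]

theorem replaceCore_lhs_mark (G : RCG N T) (r : Rule N T) :
    ∀ q ∈ replaceCore G r, ∃ m, q.1 = .inr m := by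
  simp [replaceCore]

theorem unpark_mark {m : Marker N T} (hm : m ≠ .parked r) : unpark r (mark m) = mark m := by
  simp [unpark, rename, hm]

theorem map_unpark_map_emb (r : Rule N T) (w : List (Symb N T)) :
    (w.map emb).map (unpark r) = w.map emb :=
  map_rename_of_not_mem (by simp)

def ReplaceInv (G : RCG N T) (r : Rule N T) (u v : List (Symb N T)) (t : List (ExtSymb N T)) :
    Prop :=
  t.map (unpark r) = u.map emb ++ mark (.check r (checks G r).length) :: v.map emb ∨
    t.map (unpark r) = (u ++ r.2.1 ++ v).map emb

theorem ReplaceInv.pStep {t t' : List (ExtSymb N T)} (ht : ReplaceInv G r u v t)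
    (h : PStep (replaceComp G r) t t') : ReplaceInv G r u v t' := by
  have hown : ∀ m, mark m ∈ t → m ∈ [.parked r, .check r (checks G r).length] := by
    intro m hm
    by_cases hmp : m = .parked r
    · simp [hmp]
    have := unpark_mark hmp ▸ mem_map_of_mem (f := unpark r) hm
    rcases ht with ht | ht <;> rw [ht] at this <;> simp_all
  obtain ⟨A, x, Per, X, Y, hq, rfl, rfl, -⟩ := pStep_core_of_pStep_withTraps hown h
  simp only [replaceCore, Set.mem_insert_iff, Set.mem_singleton_iff, Prod.mk.injEq] at hq
  rcases hq with ⟨rfl, rfl, rfl⟩ | ⟨rfl, rfl, rfl⟩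
  · simp only [ReplaceInv, map_append, map_cons, unpark_mark (m := .check _ _) (by simp)] at ht ⊢
    rcases ht with ht | ht
    · obtain ⟨hX, -, hY⟩ := (append_cons_inj_of_notMem (by simp) (by simp)).1 ht.symm
      right
      rw [map_unpark_map_emb, ← hX, ← hY]
    · exact absurd (congrArg (mark (.check r (checks G r).length) ∈ ·) ht) (by simp)
  · simpa [ReplaceInv, unpark, rename] using ht

theorem tStep_replaceComp_stageWord {t' : List (ExtSymb N T)}
    (h : TStep (replaceComp G r) (stageWord r u v (checks G r).length) t') :
    t' = (u ++ r.2.1 ++ v).map emb := by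
  have h₀ : ReplaceInv G r u v (stageWord r u v (checks G r).length) :=
    .inl (by simp [stageWord, map_unpark_parkWord, unpark_mark])
  have hrun := h.induction (fun t ht => h₀.pStep ht) fun t t' ht hI => hI.pStep ht
  have hpark : mark (.parked r) ∉ t' := fun hp => by
    obtain ⟨X, Y, rfl⟩ := append_of_mem hp
    exact h.2 _ ⟨.inr (.parked r), [.inl (.inl r.1)], ∅, X, Y, .inl (by simp [replaceCore]), rfl,
      rfl, by simp⟩
  rw [ReplaceInv, unpark, map_rename_of_not_mem hpark] at hrun
  rcases hrun with rfl | rfl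
  · exact absurd ⟨.inr (.check r _), r.2.1.map emb, ∅, u.map emb, v.map emb,
      .inl (by simp [replaceCore]), rfl, rfl, by simp⟩ (h.2 _)
  · rfl

theorem tStep_replaceComp_stageWord_map_emb :
    TStep (replaceComp G r) (stageWord r u v (checks G r).length) ((u ++ r.2.1 ++ v).map emb) := by
  refine ⟨.head' (b := parkWord r u ++ r.2.1.map emb ++ parkWord r v)
    ⟨.inr (.check r _), r.2.1.map emb, ∅, parkWord r u, parkWord r v,
      .inl (by simp [replaceCore]), rfl, rfl, by simp⟩ ?_,
    not_pStep_withTraps_map_emb (replaceCore_lhs_mark G r) _⟩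
  have hunpark : (.inr (.parked r), [.inl (.inl r.1)], ∅) ∈ replaceComp G r :=
    .inl (by simp [replaceCore])
  have hu := reflTransGen_pStep_map_rename hunpark (parkWord r u) [] (r.2.1.map emb ++ parkWord r v)
    (by simp)
  have hv := reflTransGen_pStep_map_rename hunpark (parkWord r v) (u.map emb ++ r.2.1.map emb) []
    (by simp)
  have e := map_unpark_parkWord (r := r)
  simp only [unpark] at e
  simp only [nil_append, append_nil, append_assoc, e] at hu hv
  simpa [stageWord] using hu.trans hv

/-! ### The grammar system -/

def comps (G : RCG N T) : List (Set (PermProd (N ⊕ Marker N T) T)) :=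
  ∅ :: (liveRules G).flatMap fun r =>
    selectComp G r :: replaceComp G r :: (checks G r).mapIdx (checkComp G r)

theorem mem_comps {P : Set (PermProd (N ⊕ Marker N T) T)} :
    P ∈ comps G ↔ P = ∅ ∨ ∃ r ∈ liveRules G, P = selectComp G r ∨ P = replaceComp G r ∨
      ∃ (n : ℕ) (hn : n < (checks G r).length), P = checkComp G r n (checks G r)[n] := by
  simp [comps, eq_comm]

theorem comps_wellFormed {P : Set (PermProd (N ⊕ Marker N T) T)} (hP : P ∈ comps G) :
    P.Finite ∧ ∀ q ∈ P, q.2.1 ≠ [] ∧ q.2.2.Subsingleton := by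
  have htrap (m : Marker N T) : (trap m).2.1 ≠ [] ∧ (trap m).2.2.Subsingleton := by simp [trap]
  rcases mem_comps.1 hP with rfl | ⟨r, hr, rfl | rfl | ⟨n, -, rfl⟩⟩
  · simp
  · exact ⟨withTraps_finite (by simp [selectCore]),
      forall_mem_withTraps (by simp [selectCore]) htrap⟩
  · have hx : r.2.1 ≠ [] := G.ne r (mem_liveRules.1 hr).1
    exact ⟨withTraps_finite (by simp [replaceCore]),
      forall_mem_withTraps (by simp [replaceCore, hx]) htrap⟩
  · refine ⟨withTraps_finite ?_, forall_mem_withTraps ?_ htrap⟩ <;>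
      cases (checks G r)[n] <;> simp [checkCore, Set.toFinite]

def toCDGS (G : RCG N T) : CDGS (N ⊕ Marker N T) T where
  comps := comps G
  comps_ne := cons_ne_nil _ _
  fin _ hP := (comps_wellFormed hP).1
  ne _ hP q hq := ((comps_wellFormed hP).2 q hq).1
  start := .inl G.start

theorem Admissible.tStep_selectComp (hr : r ∈ liveRules G) {t t' : List (ExtSymb N T)}
    (ht : Admissible G t) (h : TStep (selectComp G r) t t') : Admissible G t' := by
  have hcore := selectCore_ownsLhs r
  rcases ht with hfail | ⟨w, hw, rfl⟩ | ⟨r₀, hr₀, u, v, n, -, hn, -, rfl⟩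
  · exact .inl (fail_mem_of_tStep_withTraps hcore (by simp) hfail h)
  · exact admissible_of_tStep_selectComp_map_emb hr hw h
  by_cases hown : Marker.check r₀ n ∈ [.parked r, .check r 0]
  · obtain ⟨rfl, rfl⟩ : r₀ = r ∧ n = 0 := by simpa using hown
    exact absurd h (TStep.not_of_forall_not_pStep not_pStep_selectComp_stageWord)
  · exact .inl (fail_mem_of_tStep_withTraps_stageWord hcore (by simp) hr₀ hn hown h)

theorem Admissible.tStep_checkComp (hr : r ∈ liveRules G) {n : ℕ} (hn : n < (checks G r).length)
    {t t' : List (ExtSymb N T)} (ht : Admissible G t)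
    (h : TStep (checkComp G r n (checks G r)[n]) t t') : Admissible G t' := by
  have hcore := checkCore_ownsLhs r n (checks G r)[n]
  rcases ht with hfail | ⟨w, hw, rfl⟩ | ⟨r₀, hr₀, u, v, m, hs, hm, hchk, rfl⟩
  · exact .inl (fail_mem_of_tStep_withTraps hcore (by simp) hfail h)
  · exact absurd h (TStep.not_of_forall_not_pStep
      (not_pStep_withTraps_map_emb (checkCore_lhs_mark r n _) w))
  by_cases hown : Marker.check r₀ m ∈ [.parked r, .check r n, .check r (n + 1)]
  · obtain ⟨rfl, rfl | rfl⟩ : r₀ = r ∧ (m = n ∨ m = n + 1) := by simpa [and_or_left] using hown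
    · rcases tStep_checkComp_stageWord h with hfail | ⟨rfl, hc⟩
      · exact .inl hfail
      refine .inr (.inr ⟨r₀, hr, u, v, m + 1, hs, hn, ?_, rfl⟩)
      rw [take_succ_eq_append_getElem hn]
      intro c hc'
      rcases mem_append.1 hc' with hc' | hc'
      · exact hchk c hc'
      · rw [mem_singleton.1 hc']
        exact hc
    · refine absurd h (TStep.not_of_forall_not_pStep (not_pStep_checkComp_stageWord_succ ?_))
      rw [take_succ_eq_append_getElem hn] at hchk
      exact hchk _ (mem_append_right _ (mem_singleton_self _))
  · exact .inl (fail_mem_of_tStep_withTraps_stageWord hcore (by simp) hr₀ hm hown h)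

theorem Admissible.tStep_replaceComp (hr : r ∈ liveRules G) {t t' : List (ExtSymb N T)}
    (ht : Admissible G t) (h : TStep (replaceComp G r) t t') : Admissible G t' := by
  have hcore := replaceCore_ownsLhs G r
  rcases ht with hfail | ⟨w, hw, rfl⟩ | ⟨r₀, hr₀, u, v, m, hs, hm, hchk, rfl⟩
  · exact .inl (fail_mem_of_tStep_withTraps hcore (by simp) hfail h)
  · exact absurd h (TStep.not_of_forall_not_pStep
      (not_pStep_withTraps_map_emb (replaceCore_lhs_mark G r) w))
  by_cases hown : Marker.check r₀ m ∈ [.parked r, .check r (checks G r).length]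
  · obtain ⟨rfl, rfl⟩ : r₀ = r ∧ m = (checks G r).length := by simpa using hown
    rw [take_length] at hchk
    exact .inr (.inl ⟨_, hs.tail (step_of_forall_checks_holds hr hs hchk),
      tStep_replaceComp_stageWord h⟩)
  · exact .inl (fail_mem_of_tStep_withTraps_stageWord hcore (by simp) hr₀ hm hown h)

theorem Admissible.cdgsStep {t t' : List (ExtSymb N T)} (ht : Admissible G t)
    (h : (toCDGS G).Step t t') : Admissible G t' := by
  obtain ⟨P, hP, h⟩ := h
  rcases mem_comps.1 hP with rfl | ⟨r, hr, rfl | rfl | ⟨n, hn, rfl⟩⟩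
  · exact absurd h (TStep.not_of_forall_not_pStep fun _ ⟨_, _, _, _, _, hq, _⟩ => hq)
  · exact ht.tStep_selectComp hr h
  · exact ht.tStep_replaceComp hr h
  · exact ht.tStep_checkComp hr hn h

theorem admissible_of_reflTransGen {t : List (ExtSymb N T)}
    (h : ReflTransGen (toCDGS G).Step [.inl (.inl G.start)] t) : Admissible G t := by
  induction h with
  | refl => exact .inr (.inl ⟨_, .refl, rfl⟩)
  | tail _ h ih => exact ih.cdgsStep h

theorem reflTransGen_stageWord (hr : r ∈ liveRules G) (hchk : ∀ c ∈ checks G r, c.Holds (u ++ v))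
    {n : ℕ} (hn : n ≤ (checks G r).length) :
    ReflTransGen (toCDGS G).Step (stageWord r u v 0) (stageWord r u v n) := by
  induction n with
  | zero => exact .refl
  | succ n ih =>
    refine (ih (by omega)).tail ⟨checkComp G r n (checks G r)[n], ?_, ?_⟩
    · exact mem_comps.2 (.inr ⟨r, hr, .inr (.inr ⟨n, by omega, rfl⟩)⟩)
    · exact tStep_checkComp_stageWord_succ (hchk _ (getElem_mem _))

theorem reflTransGen_map_emb_of_step {s₁ s₂ : List (Symb N T)} (hs : G.SententialForm s₁)
    (h : G.Step false s₁ s₂) : ReflTransGen (toCDGS G).Step (s₁.map emb) (s₂.map emb) := by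
  obtain ⟨r, hr, u, v, rfl, rfl, hchk⟩ := exists_forall_checks_holds_of_step hs h
  refine .head ⟨selectComp G r, mem_comps.2 (.inr ⟨r, hr, .inl rfl⟩), tStep_selectComp_map_emb⟩
    ((reflTransGen_stageWord hr hchk le_rfl).tail ?_)
  exact ⟨replaceComp G r, mem_comps.2 (.inr ⟨r, hr, .inr (.inl rfl)⟩),
    tStep_replaceComp_stageWord_map_emb⟩

theorem reflTransGen_map_emb_of_sententialForm {w : List (Symb N T)} (hw : G.SententialForm w) :
    ReflTransGen (toCDGS G).Step [.inl (.inl G.start)] (w.map emb) := by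
  induction hw with
  | refl => exact .refl
  | tail hs h ih => exact ih.trans (reflTransGen_map_emb_of_step hs h)

theorem toCDGS_lang (G : RCG N T) : (toCDGS G).Lang = G.Lang false := by
  have hterm (w : List T) : (w.map Sum.inr).map emb = (w.map .inr : List (ExtSymb N T)) := by
    simp [Function.comp_def]
  ext w
  constructor
  · intro hw
    rcases admissible_of_reflTransGen hw with hfail | ⟨w', hw', he⟩ | ⟨r, -, u, v, n, -, -, -, he⟩
    · simp at hfail
    · rw [← hterm, (map_injective_iff.2 emb_injective).eq_iff] at he
      exact (he ▸ hw' : G.SententialForm (w.map Sum.inr))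
    · exact absurd (he ▸ by simp [stageWord] : mark (.check r n) ∈ w.map Sum.inr) (by simp)
  · intro hw
    exact (hterm w ▸ reflTransGen_map_emb_of_sententialForm hw :)

end

end RCG

/-- every random context language is generated by a permitting CD
grammar system in `t`-mode whose permitting sets are empty or singletons. -/
theorem rc_subset_cdp_singleton (T : Type) (L : Set (List T)) (hL : L ∈ RC T) :
    ∃ (N : Type) (Γ : CDGS N T),
      (∀ P ∈ Γ.comps, ∀ r ∈ P, r.2.2.Subsingleton) ∧ Γ.Lang = L := by
  obtain ⟨N, G, rfl⟩ := hL
  exact ⟨_, G.toCDGS, fun _ hP q hq => ((RCG.comps_wellFormed hP).2 q hq).2, G.toCDGS_lang⟩
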